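/- arXiv:1008.2108 — 2 statements merged into one kernel-verified Lean document; each statement's English description precedes it below -/
import Mathlib

section
/- For all closed BCCSP processes p, q, r and every action a ∈ A: if p ⊑_CS q then a.p ⊑_CS a.q, and a.p + r ⊑_CS a.q + r. -/
inductive Proc (A : Type) : Type
  | nil : Proc A
  | pre : A → Proc A → Proc A
  | add : Proc A → Proc A → Proc A

inductive Step {A : Type} : Proc A → A → Proc A → Prop
  | pre (a : A) (p : Proc A) : Step (.pre a p) a p
  | addL {p : Proc A} {a : A} {p' : Proc A} (q : Proc A) :
      Step p a p' → Step (.add p q) a p'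
  | addR {q : Proc A} {a : A} {q' : Proc A} (p : Proc A) :
      Step q a q' → Step (.add p q) a q'

/-- `initials p` is the set `I(p)` of actions that `p` can immediately perform. -/
def initials {A : Type} (p : Proc A) : Set A := {a | ∃ p', Step p a p'}

/-- `{Ar, Al, Abi}` is a partition of the action set `A` (cells may be empty). -/
def IsPartition {A : Type} (Ar Al Abi : Set A) : Prop :=
  (Ar ∪ Al ∪ Abi = Set.univ) ∧ Disjoint Ar Al ∧ Disjoint Ar Abi ∧ Disjoint Al Abi

/-- Covariant-contravariant simulation w.r.t. covariant actions `Ar`,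
contravariant actions `Al` and bivariant actions `Abi`. -/
def IsCCSim {A : Type} (Ar Al Abi : Set A) (S : Proc A → Proc A → Prop) : Prop :=
  ∀ p q, S p q →
    (∀ a ∈ Ar ∪ Abi, ∀ p', Step p a p' → ∃ q', Step q a q' ∧ S p' q') ∧
    (∀ a ∈ Al ∪ Abi, ∀ q', Step q a q' → ∃ p', Step p a p' ∧ S p' q')

/-- The covariant-contravariant simulation preorder `p ≲_CC q`. -/
def ccLe {A : Type} (Ar Al Abi : Set A) (p q : Proc A) : Prop :=
  ∃ S, IsCCSim Ar Al Abi S ∧ S p q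

/-- Covariant-contravariant simulation equivalence `p ≡_CC q`. -/
def ccEq {A : Type} (Ar Al Abi : Set A) (p q : Proc A) : Prop :=
  ccLe Ar Al Abi p q ∧ ccLe Ar Al Abi q p

/-- Conformance simulation. -/
def IsConfSim {A : Type} (R : Proc A → Proc A → Prop) : Prop :=
  ∀ p q, R p q →
    initials p ⊆ initials q ∧
    (∀ a q', Step q a q' → a ∈ initials p → ∃ p', Step p a p' ∧ R p' q')

/-- The conformance simulation preorder `p ≲_CS q`. -/
def csLe {A : Type} (p q : Proc A) : Prop := ∃ R, IsConfSim R ∧ R p q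

/-- Conformance simulation equivalence `p ≡_CS q`. -/
def csEq {A : Type} (p q : Proc A) : Prop := csLe p q ∧ csLe q p

/-- The conformance precongruence `p ⊑_CS q`. -/
def csPre {A : Type} (p q : Proc A) : Prop := csLe p q ∧ initials q ⊆ initials p

/-- Plain simulation. -/
def IsSim {A : Type} (S : Proc A → Proc A → Prop) : Prop :=
  ∀ p q, S p q → ∀ a p', Step p a p' → ∃ q', Step q a q' ∧ S p' q'

/-- The plain simulation preorder `p ≲_S q`. -/
def simLe {A : Type} (p q : Proc A) : Prop := ∃ S, IsSim S ∧ S p q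

/-- Ready simulation. -/
def IsRSim {A : Type} (S : Proc A → Proc A → Prop) : Prop :=
  ∀ p q, S p q → initials p = initials q ∧
    (∀ a p', Step p a p' → ∃ q', Step q a q' ∧ S p' q')

/-- The ready simulation preorder `p ≲_RS q`. -/
def rsLe {A : Type} (p q : Proc A) : Prop := ∃ S, IsRSim S ∧ S p q

/-- Ready conformance simulation: a conformance simulation that additionally
guarantees `I(q) ⊆ I(p)` for all related pairs. -/
def IsRCSim {A : Type} (R : Proc A → Proc A → Prop) : Prop :=
  IsConfSim R ∧ ∀ p q, R p q → initials q ⊆ initials p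

/-- The ready conformance simulation preorder `p ≲_RCS q`. -/
def rcsLe {A : Type} (p q : Proc A) : Prop := ∃ R, IsRCSim R ∧ R p q

/-- Open BCCSP terms (with variables indexed by `ℕ`). -/
inductive Term (A : Type) : Type
  | var : ℕ → Term A
  | nil : Term A
  | pre : A → Term A → Term A
  | add : Term A → Term A → Term A

/-- Closed substitution applied to an open term. -/
def Term.subst {A : Type} (σ : ℕ → Proc A) : Term A → Proc A
  | .var n => σ n
  | .nil => .nil
  | .pre a t => .pre a (t.subst σ)
  | .add s t => .add (s.subst σ) (t.subst σ)

/-- View a closed process as an (open) term. -/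
def Proc.toTerm {A : Type} : Proc A → Term A
  | .nil => .nil
  | .pre a p => .pre a p.toTerm
  | .add p q => .add p.toTerm q.toTerm

/-- Inequational derivability (between closed processes) from a set `E` of
inequations between open terms: the least relation containing all substitution
instances of `E` and closed under reflexivity, transitivity and the congruence
rules for prefixing and `+`. -/
inductive DerivLe {A : Type} (E : Set (Term A × Term A)) : Proc A → Proc A → Prop
  | ax (l r : Term A) (σ : ℕ → Proc A) : (l, r) ∈ E → DerivLe E (l.subst σ) (r.subst σ)
  | refl (p : Proc A) : DerivLe E p p
  | trans {p q r : Proc A} : DerivLe E p q → DerivLe E q r → DerivLe E p r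
  | pre (a : A) {p q : Proc A} : DerivLe E p q → DerivLe E (.pre a p) (.pre a q)
  | add {p q r s : Proc A} : DerivLe E p q → DerivLe E r s → DerivLe E (.add p r) (.add q s)

/-- Equational derivability (between closed processes) from a set `E` of
equations between open terms. -/
inductive DerivEq {A : Type} (E : Set (Term A × Term A)) : Proc A → Proc A → Prop
  | ax (l r : Term A) (σ : ℕ → Proc A) : (l, r) ∈ E → DerivEq E (l.subst σ) (r.subst σ)
  | refl (p : Proc A) : DerivEq E p p
  | symm {p q : Proc A} : DerivEq E p q → DerivEq E q p
  | trans {p q r : Proc A} : DerivEq E p q → DerivEq E q r → DerivEq E p r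
  | pre (a : A) {p q : Proc A} : DerivEq E p q → DerivEq E (.pre a p) (.pre a q)
  | add {p q r s : Proc A} : DerivEq E p q → DerivEq E r s → DerivEq E (.add p r) (.add q s)

/-- Substitution of (possibly open) terms for variables. -/
def Term.substT {A : Type} (σ : ℕ → Term A) : Term A → Term A
  | .var n => σ n
  | .nil => .nil
  | .pre a t => .pre a (t.substT σ)
  | .add s t => .add (s.substT σ) (t.substT σ)

/-- Equational derivability between open terms from a set `E` of equations. -/
inductive TDerivEq {A : Type} (E : Set (Term A × Term A)) : Term A → Term A → Prop
  | ax (l r : Term A) (σ : ℕ → Term A) : (l, r) ∈ E → TDerivEq E (l.substT σ) (r.substT σ)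
  | refl (t : Term A) : TDerivEq E t t
  | symm {s t : Term A} : TDerivEq E s t → TDerivEq E t s
  | trans {s t u : Term A} : TDerivEq E s t → TDerivEq E t u → TDerivEq E s u
  | pre (a : A) {s t : Term A} : TDerivEq E s t → TDerivEq E (.pre a s) (.pre a t)
  | add {s t u v : Term A} : TDerivEq E s t → TDerivEq E u v → TDerivEq E (.add s u) (.add t v)

/-- The bisimulation axioms B1–B4, as equations. -/
def BEqns (A : Type) : Set (Term A × Term A) :=
  { (.add (.var 0) (.var 1), .add (.var 1) (.var 0)),
    (.add (.add (.var 0) (.var 1)) (.var 2), .add (.var 0) (.add (.var 1) (.var 2))),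
    (.add (.var 0) (.var 0), .var 0),
    (.add (.var 0) .nil, .var 0) }

/-- The bisimulation axioms B1–B4, each used as two inequations. -/
def BIneqs (A : Type) : Set (Term A × Term A) := BEqns A ∪ Prod.swap '' BEqns A

/-!
A single coinduction principle for `≲_CS` does all the work: to show `x ≲_CS y` it suffices to
check the two clauses of a conformance simulation at `(x, y)` with `≲_CS` itself on the
successors. For `+`, a move of `y + v` taken from `y` with an action of `x + u` is an action of
`y`, hence of `x` because `I(y) ⊆ I(x)`; this is why `⊑_CS`, unlike `≲_CS`, is preserved by
sums.
-/

theorem step_pre_iff {A : Type} {a b : A} {p p' : Proc A} :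
    Step (.pre a p) b p' ↔ b = a ∧ p' = p := by
  constructor
  · rintro ⟨⟩
    exact ⟨rfl, rfl⟩
  · rintro ⟨rfl, rfl⟩
    exact .pre _ _

theorem step_add_iff {A : Type} {a : A} {p q r : Proc A} :
    Step (.add p q) a r ↔ Step p a r ∨ Step q a r := by
  constructor
  · intro h
    cases h with
    | addL _ h => exact .inl h
    | addR _ h => exact .inr h
  · rintro (h | h)
    exacts [.addL q h, .addR p h]

theorem initials_pre {A : Type} (a : A) (p : Proc A) : initials (.pre a p) = {a} := by
  ext b
  simp [initials, step_pre_iff]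

theorem initials_add {A : Type} (p q : Proc A) :
    initials (.add p q) = initials p ∪ initials q := by
  ext b
  simp only [initials, step_add_iff, Set.mem_ofPred_eq, Set.mem_union, exists_or]

theorem isConfSim_csLe {A : Type} : IsConfSim (csLe (A := A)) := by
  rintro p q ⟨R, hR, hpq⟩
  obtain ⟨hI, hstep⟩ := hR p q hpq
  refine ⟨hI, fun a q' hq ha => ?_⟩
  obtain ⟨p', hp, hR'⟩ := hstep a q' hq ha
  exact ⟨p', hp, R, hR, hR'⟩

theorem csLe_of_step {A : Type} {x y : Proc A} (hI : initials x ⊆ initials y)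
    (hstep : ∀ a y', Step y a y' → a ∈ initials x → ∃ x', Step x a x' ∧ csLe x' y') :
    csLe x y := by
  refine ⟨fun u v => csLe u v ∨ (u = x ∧ v = y), ?_, .inr ⟨rfl, rfl⟩⟩
  rintro u v (huv | ⟨rfl, rfl⟩)
  · obtain ⟨hI', hstep'⟩ := isConfSim_csLe u v huv
    exact ⟨hI', fun a v' hv ha => (hstep' a v' hv ha).imp fun _ h => ⟨h.1, .inl h.2⟩⟩
  · exact ⟨hI, fun a v' hv ha => (hstep a v' hv ha).imp fun _ h => ⟨h.1, .inl h.2⟩⟩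

theorem csLe_refl {A : Type} (p : Proc A) : csLe p p :=
  ⟨Eq, fun _ _ h => h ▸ ⟨subset_rfl, fun _ q' hq _ => ⟨q', hq, rfl⟩⟩, rfl⟩

theorem csPre_refl {A : Type} (p : Proc A) : csPre p p :=
  ⟨csLe_refl p, subset_rfl⟩

theorem csPre_pre {A : Type} (a : A) {p q : Proc A} (h : csLe p q) :
    csPre (.pre a p) (.pre a q) := by
  have hI : initials (.pre a p) = initials (.pre a q) := by rw [initials_pre, initials_pre]
  refine ⟨csLe_of_step hI.subset fun b q' hq _ => ?_, hI.symm.subset⟩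
  obtain ⟨rfl, rfl⟩ := step_pre_iff.1 hq
  exact ⟨p, .pre b p, h⟩

theorem csPre_add {A : Type} {x y u v : Proc A} (hxy : csPre x y) (huv : csPre u v) :
    csPre (.add x u) (.add y v) := by
  have hI : initials (.add x u) ⊆ initials (.add y v) := by
    rw [initials_add, initials_add]
    exact Set.union_subset_union (isConfSim_csLe x y hxy.1).1 (isConfSim_csLe u v huv.1).1
  refine ⟨csLe_of_step hI fun b w hw hb => ?_, ?_⟩
  · rcases step_add_iff.1 hw with hw | hw
    · obtain ⟨x', hx, hx'⟩ := (isConfSim_csLe x y hxy.1).2 b w hw (hxy.2 ⟨w, hw⟩)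
      exact ⟨x', .addL u hx, hx'⟩
    · obtain ⟨u', hu, hu'⟩ := (isConfSim_csLe u v huv.1).2 b w hw (huv.2 ⟨w, hw⟩)
      exact ⟨u', .addR x hu, hu'⟩
  · rw [initials_add, initials_add]
    exact Set.union_subset_union hxy.2 huv.2

/-- `⊑_CS` is preserved by prefixing and by sum with a common summand. -/
theorem csPre_congruence {A : Type} (p q r : Proc A) (a : A)
    (h : csPre p q) :
    csPre (.pre a p) (.pre a q) ∧
    csPre (.add (.pre a p) r) (.add (.pre a q) r) :=
  ⟨csPre_pre a h.1, csPre_add (csPre_pre a h.1) (csPre_refl r)⟩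
end

section
/- Let A be an action set with partition {A^r, A^l, A^bi} where A^bi = ∅ (so A = A^r ∪ A^l). Then the axiom set A_CC^≡ is complete for covariant-contravariant simulation equivalence: for all closed BCCSP processes p, q, if p ≡_CC q then the equation p = q is equationally derivable from A_CC^≡. -/
/-- Schema (S1): `a.(x + b.y) = a.(x + b.y) + a.x` for `a, b ∈ A^r`. -/
def S1Eqns {A : Type} (Ar : Set A) : Set (Term A × Term A) :=
  { e | ∃ a ∈ Ar, ∃ b ∈ Ar,
      e = (.pre a (.add (.var 0) (.pre b (.var 1))),
           .add (.pre a (.add (.var 0) (.pre b (.var 1)))) (.pre a (.var 0))) }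

/-- Schema (S2): `a.x = a.x + a.(x + b'.y)` for `a ∈ A^r`, `b' ∈ A^l`. -/
def S2Eqns {A : Type} (Ar Al : Set A) : Set (Term A × Term A) :=
  { e | ∃ a ∈ Ar, ∃ b ∈ Al,
      e = (.pre a (.var 0),
           .add (.pre a (.var 0)) (.pre a (.add (.var 0) (.pre b (.var 1))))) }

/-- Schema (S3): `a'.x = a'.x + a'.(x + b.y)` for `a' ∈ A^l`, `b ∈ A^r`. -/
def S3Eqns {A : Type} (Ar Al : Set A) : Set (Term A × Term A) :=
  { e | ∃ a ∈ Al, ∃ b ∈ Ar,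
      e = (.pre a (.var 0),
           .add (.pre a (.var 0)) (.pre a (.add (.var 0) (.pre b (.var 1))))) }

/-- Schema (S4): `a'.(x + b'.y) = a'.(x + b'.y) + a'.x` for `a', b' ∈ A^l`. -/
def S4Eqns {A : Type} (Al : Set A) : Set (Term A × Term A) :=
  { e | ∃ a ∈ Al, ∃ b ∈ Al,
      e = (.pre a (.add (.var 0) (.pre b (.var 1))),
           .add (.pre a (.add (.var 0) (.pre b (.var 1)))) (.pre a (.var 0))) }

/-- The axiom set `A_CC^≡`: B1–B4 together with the schemas S1–S4. -/
def ACCEq {A : Type} (Ar Al : Set A) : Set (Term A × Term A) :=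
  BEqns A ∪ S1Eqns Ar ∪ S2Eqns Ar Al ∪ S3Eqns Ar Al ∪ S4Eqns Al

/-! Modulo B1–B4, closed terms form a join-semilattice under `+` with bottom `0`; write `p ≤ q`
for `p + q = q`. Under a prefix `a.`, adding a summand `b.y` can only go up when `a` and `b` have
the same variance (S1, S4) and only go down when they have opposite variances (S2, S3).

Let `p ≲_CC q`. By induction, every covariant summand `b.p'` of `p` lies below a summand `b.q'`
of `q`, and every contravariant summand of `q` below one of `p`; hence
`p + q|Ar = q + p|Al`, where `r|B` keeps the summands of `r` with actions in `B`. So for `a ∈ Ar`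
we get `a.p ≤ a.(p + q|Ar) = a.(q + p|Al) ≤ a.q`, and dually `a.q ≤ a.p` for `a ∈ Al`.
If moreover `q ≲_CC p`, these prefix inequalities put every summand of `p` below `q` and
vice versa. -/

variable {A : Type}

theorem Step.sizeOf_lt {p p' : Proc A} {a : A} (h : Step p a p') : sizeOf p' < sizeOf p := by
  induction h <;> simp <;> omega

theorem isCCSim_ccLe {Ar Al Abi : Set A} : IsCCSim Ar Al Abi (ccLe Ar Al Abi) := by
  rintro p q ⟨S, hS, hpq⟩
  refine ⟨fun a ha p' hp => ?_, fun a ha q' hq => ?_⟩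
  · obtain ⟨q', hq, hS'⟩ := (hS p q hpq).1 a ha p' hp
    exact ⟨q', hq, S, hS, hS'⟩
  · obtain ⟨p', hp, hS'⟩ := (hS p q hpq).2 a ha q' hq
    exact ⟨p', hp, S, hS, hS'⟩

namespace Proc

open Classical in
noncomputable def restrict (B : Set A) : Proc A → Proc A
  | nil => nil
  | pre a p => if a ∈ B then pre a p else nil
  | add p q => add (p.restrict B) (q.restrict B)

theorem step_restrict_iff {B : Set A} {p r : Proc A} {b : A} :
    Step (p.restrict B) b r ↔ Step p b r ∧ b ∈ B := by
  induction p with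
  | nil => simp only [restrict]; exact ⟨nofun, fun ⟨h, _⟩ => nomatch h⟩
  | pre a p =>
    by_cases ha : a ∈ B
    · simp only [restrict, if_pos ha]
      exact ⟨fun h => by cases h; exact ⟨.pre _ _, ha⟩, fun ⟨h, _⟩ => h⟩
    · simp only [restrict, if_neg ha]
      exact ⟨nofun, fun ⟨h, hb⟩ => by cases h; exact absurd hb ha⟩
  | add p q ihp ihq =>
    simp only [restrict]
    constructor
    · intro h
      cases h with
      | addL _ h => exact ⟨.addL q (ihp.1 h).1, (ihp.1 h).2⟩
      | addR _ h => exact ⟨.addR p (ihq.1 h).1, (ihq.1 h).2⟩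
    · rintro ⟨h, hb⟩
      cases h with
      | addL _ h => exact .addL _ (ihp.2 ⟨h, hb⟩)
      | addR _ h => exact .addR _ (ihq.2 ⟨h, hb⟩)

theorem initials_restrict_subset (B : Set A) (p : Proc A) : initials (p.restrict B) ⊆ B :=
  fun _ ⟨_, h⟩ => (step_restrict_iff.1 h).2

end Proc

def DerivEq.setoid (E : Set (Term A × Term A)) : Setoid (Proc A) where
  r := DerivEq E
  iseqv := ⟨DerivEq.refl, DerivEq.symm, DerivEq.trans⟩

abbrev ProcQuot (E : Set (Term A × Term A)) : Type := Quotient (DerivEq.setoid E)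

namespace ProcQuot

variable {E : Set (Term A × Term A)}

instance : Max (ProcQuot E) := ⟨Quotient.map₂ Proc.add fun _ _ h _ _ h' => DerivEq.add h h'⟩

instance : Bot (ProcQuot E) := ⟨⟦.nil⟧⟩

def pre (a : A) : ProcQuot E → ProcQuot E := Quotient.map (.pre a) fun _ _ => DerivEq.pre a

@[simp]
theorem mk_add (p q : Proc A) : (⟦p.add q⟧ : ProcQuot E) = ⟦p⟧ ⊔ ⟦q⟧ := rfl

theorem mk_eq_mk_of_mem {l r : Term A} (h : (l, r) ∈ E) (σ : ℕ → Proc A) :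
    (⟦l.subst σ⟧ : ProcQuot E) = ⟦r.subst σ⟧ :=
  Quotient.sound (DerivEq.ax l r σ h)

variable [hE : Fact (BEqns A ⊆ E)]

instance : SemilatticeSup (ProcQuot E) := by
  refine SemilatticeSup.mk' (fun x y => ?_) (fun x y z => ?_) (fun x => ?_)
  · induction x, y using Quotient.inductionOn₂ with | _ p q =>
    exact mk_eq_mk_of_mem (hE.out (Or.inl rfl)) (fun n => if n = 0 then p else q)
  · induction x, y, z using Quotient.inductionOn₃ with | _ p q r =>
    exact mk_eq_mk_of_mem (hE.out (Or.inr (Or.inl rfl)))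
      (fun n => if n = 0 then p else if n = 1 then q else r)
  · induction x using Quotient.inductionOn with | _ p =>
    exact mk_eq_mk_of_mem (hE.out (Or.inr (Or.inr (Or.inl rfl)))) (fun _ => p)

instance : OrderBot (ProcQuot E) where
  bot_le x := by
    induction x using Quotient.inductionOn with | _ p =>
    rw [← sup_eq_right, sup_comm]
    exact mk_eq_mk_of_mem (hE.out (Or.inr (Or.inr (Or.inr rfl)))) (fun _ => p)

theorem mk_le_of_forall_step {p : Proc A} {t : ProcQuot E}
    (h : ∀ b p', Step p b p' → pre b ⟦p'⟧ ≤ t) : ⟦p⟧ ≤ t := by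
  induction p with
  | nil => exact bot_le
  | pre a p => exact h a p (.pre a p)
  | add p q ihp ihq =>
    exact sup_le (ihp fun b p' hs => h b p' (.addL q hs))
      (ihq fun b q' hs => h b q' (.addR p hs))

theorem pre_mk_le_of_step {q q' : Proc A} {b : A} (h : Step q b q') :
    pre b ⟦q'⟧ ≤ (⟦q⟧ : ProcQuot E) := by
  induction h with
  | pre => exact le_rfl
  | addL _ _ ih => exact (mk_add _ _).symm ▸ le_sup_of_le_left ih
  | addR _ _ ih => exact (mk_add _ _).symm ▸ le_sup_of_le_right ih

theorem mk_restrict_le (B : Set A) (p : Proc A) : (⟦p.restrict B⟧ : ProcQuot E) ≤ ⟦p⟧ :=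
  mk_le_of_forall_step fun _ _ hs => pre_mk_le_of_step (Proc.step_restrict_iff.1 hs).1

theorem mk_le_sup_restrict {C D : Set A} (hCD : ∀ a, a ∈ C ∨ a ∈ D) {p : Proc A}
    {t : ProcQuot E} (h : ∀ b ∈ C, ∀ p', Step p b p' → pre b ⟦p'⟧ ≤ t) :
    ⟦p⟧ ≤ t ⊔ ⟦p.restrict D⟧ :=
  mk_le_of_forall_step fun b p' hs => (hCD b).elim
    (fun hb => le_sup_of_le_left (h b hb p' hs))
    (fun hb => le_sup_of_le_right (pre_mk_le_of_step (Proc.step_restrict_iff.2 ⟨hs, hb⟩)))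

theorem sup_restrict_eq {C D : Set A} (hCD : ∀ a, a ∈ C ∨ a ∈ D) {p q : Proc A}
    (hp : ∀ b ∈ C, ∀ p', Step p b p' → pre b ⟦p'⟧ ≤ (⟦q⟧ : ProcQuot E))
    (hq : ∀ b ∈ D, ∀ q', Step q b q' → pre b ⟦q'⟧ ≤ (⟦p⟧ : ProcQuot E)) :
    (⟦p⟧ ⊔ ⟦q.restrict C⟧ : ProcQuot E) = ⟦q⟧ ⊔ ⟦p.restrict D⟧ :=
  le_antisymm
    (sup_le (mk_le_sup_restrict hCD hp) (le_sup_of_le_left (mk_restrict_le C q)))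
    (sup_le (mk_le_sup_restrict (fun a => (hCD a).symm) hq)
      (le_sup_of_le_left (mk_restrict_le D p)))

/-- Stated for an arbitrary `f` so that it also covers the order dual. -/
theorem apply_le_apply_sup_mk {β : Type*} [Preorder β] {f : ProcQuot E → β} {B : Set A}
    (hf : ∀ b ∈ B, ∀ x y, f x ≤ f (x ⊔ pre b y)) {r : Proc A} (hr : initials r ⊆ B)
    (x : ProcQuot E) : f x ≤ f (x ⊔ ⟦r⟧) := by
  induction r generalizing x with
  | nil => exact (congrArg f (sup_bot_eq x)).ge
  | pre b y => exact hf b (hr ⟨y, .pre b y⟩) x ⟦y⟧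
  | add r s ihr ihs =>
    calc f x ≤ f (x ⊔ ⟦r⟧) := ihr (fun b ⟨r', h⟩ => hr ⟨r', .addL s h⟩) x
      _ ≤ f (x ⊔ ⟦r⟧ ⊔ ⟦s⟧) := ihs (fun b ⟨s', h⟩ => hr ⟨s', .addR r h⟩) _
      _ = f (x ⊔ ⟦r.add s⟧) := congrArg f (sup_assoc _ _ _)

theorem pre_le_pre_of_sup_restrict_eq {C D : Set A} {a : A}
    (hC : ∀ b ∈ C, ∀ x y : ProcQuot E, pre a x ≤ pre a (x ⊔ pre b y))
    (hD : ∀ b ∈ D, ∀ x y : ProcQuot E, pre a (x ⊔ pre b y) ≤ pre a x) {p q : Proc A}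
    (h : (⟦p⟧ ⊔ ⟦q.restrict C⟧ : ProcQuot E) = ⟦q⟧ ⊔ ⟦p.restrict D⟧) :
    pre a ⟦p⟧ ≤ (pre a ⟦q⟧ : ProcQuot E) :=
  calc pre a ⟦p⟧ ≤ pre a (⟦p⟧ ⊔ ⟦q.restrict C⟧) :=
        apply_le_apply_sup_mk hC (Proc.initials_restrict_subset C q) _
    _ = pre a (⟦q⟧ ⊔ ⟦p.restrict D⟧) := congrArg (pre a) h
    _ ≤ pre a ⟦q⟧ :=
        apply_le_apply_sup_mk (f := OrderDual.toDual ∘ pre a) hD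
          (Proc.initials_restrict_subset D p) ⟦q⟧

theorem pre_le_pre_sup_pre_of_mem {a b : A}
    (h : (.pre a (.add (.var 0) (.pre b (.var 1))),
      .add (.pre a (.add (.var 0) (.pre b (.var 1)))) (.pre a (.var 0))) ∈ E)
    (x y : ProcQuot E) : pre a x ≤ pre a (x ⊔ pre b y) := by
  induction x, y using Quotient.inductionOn₂ with | _ x y =>
  exact sup_eq_left.1 (mk_eq_mk_of_mem h (fun n => if n = 0 then x else y)).symm

theorem pre_sup_pre_le_pre_of_mem {a b : A}
    (h : (.pre a (.var 0), .add (.pre a (.var 0)) (.pre a (.add (.var 0) (.pre b (.var 1))))) ∈ E)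
    (x y : ProcQuot E) : pre a (x ⊔ pre b y) ≤ pre a x := by
  induction x, y using Quotient.inductionOn₂ with | _ x y =>
  exact sup_eq_left.1 (mk_eq_mk_of_mem h (fun n => if n = 0 then x else y)).symm

end ProcQuot

instance (Ar Al : Set A) : Fact (BEqns A ⊆ ACCEq Ar Al) :=
  ⟨fun _ h => Or.inl (Or.inl (Or.inl (Or.inl h)))⟩

namespace ProcQuot

variable {Ar Al : Set A}

theorem pre_le_pre_of_ccLe (hcov : ∀ a, a ∈ Ar ∨ a ∈ Al) {p q : Proc A}
    (h : ccLe Ar Al ∅ p q) :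
    (∀ a ∈ Ar, pre a ⟦p⟧ ≤ (pre a ⟦q⟧ : ProcQuot (ACCEq Ar Al))) ∧
    (∀ a ∈ Al, pre a ⟦q⟧ ≤ (pre a ⟦p⟧ : ProcQuot (ACCEq Ar Al))) := by
  have heq :
      (⟦p⟧ ⊔ ⟦q.restrict Ar⟧ : ProcQuot (ACCEq Ar Al)) = ⟦q⟧ ⊔ ⟦p.restrict Al⟧ := by
    refine sup_restrict_eq hcov (fun b hb p' hp => ?_) (fun b hb q' hq => ?_)
    · obtain ⟨q', hq, h'⟩ := (isCCSim_ccLe p q h).1 b (Or.inl hb) p' hp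
      exact ((pre_le_pre_of_ccLe hcov h').1 b hb).trans (pre_mk_le_of_step hq)
    · obtain ⟨p', hp, h'⟩ := (isCCSim_ccLe p q h).2 b (Or.inl hb) q' hq
      exact ((pre_le_pre_of_ccLe hcov h').2 b hb).trans (pre_mk_le_of_step hp)
  refine ⟨fun a ha => pre_le_pre_of_sup_restrict_eq (fun b hb => ?S1) (fun b hb => ?S2) heq,
    fun a ha => pre_le_pre_of_sup_restrict_eq (fun b hb => ?S4) (fun b hb => ?S3) heq.symm⟩
  case S1 =>
    exact pre_le_pre_sup_pre_of_mem (.inl <| .inl <| .inl <| .inr ⟨a, ha, b, hb, rfl⟩)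
  case S2 => exact pre_sup_pre_le_pre_of_mem (.inl <| .inl <| .inr ⟨a, ha, b, hb, rfl⟩)
  case S3 => exact pre_sup_pre_le_pre_of_mem (.inl <| .inr ⟨a, ha, b, hb, rfl⟩)
  case S4 => exact pre_le_pre_sup_pre_of_mem (.inr ⟨a, ha, b, hb, rfl⟩)
termination_by sizeOf p
decreasing_by all_goals exact Step.sizeOf_lt ‹_›

theorem mk_le_mk_of_ccEq (hcov : ∀ a, a ∈ Ar ∨ a ∈ Al) {p q : Proc A}
    (h : ccEq Ar Al ∅ p q) : (⟦p⟧ : ProcQuot (ACCEq Ar Al)) ≤ ⟦q⟧ := by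
  refine mk_le_of_forall_step fun b p' hp => ?_
  rcases hcov b with hb | hb
  · obtain ⟨q', hq, h'⟩ := (isCCSim_ccLe p q h.1).1 b (Or.inl hb) p' hp
    exact ((pre_le_pre_of_ccLe hcov h').1 b hb).trans (pre_mk_le_of_step hq)
  · obtain ⟨q', hq, h'⟩ := (isCCSim_ccLe q p h.2).2 b (Or.inl hb) p' hp
    exact ((pre_le_pre_of_ccLe hcov h').2 b hb).trans (pre_mk_le_of_step hq)

end ProcQuot

/-- When `A^bi = ∅`, the axiom set `A_CC^≡` is complete for
covariant-contravariant simulation equivalence. -/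
theorem ACCEq_complete {A : Type} (Ar Al Abi : Set A)
    (hpart : IsPartition Ar Al Abi) (hbi : Abi = ∅)
    (p q : Proc A) (hpq : ccEq Ar Al Abi p q) :
    DerivEq (ACCEq Ar Al) p q := by
  subst hbi
  have hcov : ∀ a, a ∈ Ar ∨ a ∈ Al := fun a => by simpa using hpart.1.ge (Set.mem_univ a)
  exact Quotient.exact <| le_antisymm (ProcQuot.mk_le_mk_of_ccEq hcov hpq)
    (ProcQuot.mk_le_mk_of_ccEq hcov ⟨hpq.2, hpq.1⟩)
end
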